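/- arXiv:1112.4205 — 3 statements merged into one kernel-verified Lean document; each statement's English description precedes it below -/
import Mathlib

section
/- The Takagi function maps rational numbers in [0,1] to rational numbers. -/
open scoped BigOperators

/-- Distance from a real number to the nearest integer. -/
noncomputable def nearestDist (t : ℝ) : ℝ := |t - round t|

/-- The Takagi function. -/
noncomputable def takagi (x : ℝ) : ℝ := ∑' n : ℕ, (1 / 2 ^ n) * nearestDist (2 ^ n * x)

/-- Partial Takagi function of level `n`. -/
noncomputable def takagiPartial (n : ℕ) (x : ℝ) : ℝ :=
  ∑ j ∈ Finset.range n, (1 / 2 ^ j) * nearestDist (2 ^ j * x)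

/-- The symmetric tent map. -/
noncomputable def tent (x : ℝ) : ℝ := if x ≤ 1 / 2 then 2 * x else 2 - 2 * x

/-!
For rational `q` the numbers `2 ^ n * q` modulo `1` lie in the finite set `(q.den)⁻¹ ℤ / ℤ`,
so `2 ^ (N + p) * q ≡ 2 ^ N * q (mod 1)` for some `N` and some `p > 0`.
Since `⟨·⟩` is `1`-periodic, the terms of the Takagi series at `q` then satisfy
`a (n + p) = a n / 2 ^ p` from index `N` on, and the series is a finite sum of rationals plus
a geometric series with rational ratio.
-/

open Finset

lemma nearestDist_add_intCast (t : ℝ) (z : ℤ) : nearestDist (t + z) = nearestDist t := by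
  simp only [nearestDist, round_add_intCast, Int.cast_add, add_sub_add_right_eq_sub]

lemma nearestDist_ratCast (x : ℚ) : nearestDist x = ((|x - round x| : ℚ) : ℝ) := by
  simp only [nearestDist, Rat.round_cast, Rat.cast_abs, Rat.cast_sub, Rat.cast_intCast]

lemma nearestDist_le_one (t : ℝ) : nearestDist t ≤ 1 :=
  (abs_sub_round t).trans (by norm_num)

noncomputable def takagiTerm (x : ℝ) (n : ℕ) : ℝ := 1 / 2 ^ n * nearestDist (2 ^ n * x)

lemma takagi_eq_tsum_takagiTerm (x : ℝ) : takagi x = ∑' n, takagiTerm x n := rfl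

lemma summable_takagiTerm (x : ℝ) : Summable (takagiTerm x) := by
  refine Summable.of_nonneg_of_le (fun n => ?_) (fun n => ?_)
    (summable_geometric_of_lt_one (r := 1 / 2) (by norm_num) (by norm_num))
  · exact mul_nonneg (by positivity) (abs_nonneg _)
  · calc takagiTerm x n ≤ 1 / 2 ^ n * 1 :=
          mul_le_mul_of_nonneg_left (nearestDist_le_one _) (by positivity)
      _ = (1 / 2) ^ n := by rw [mul_one, one_div_pow]

lemma takagiTerm_ratCast_mem_fieldRange (q : ℚ) (n : ℕ) :
    takagiTerm q n ∈ (Rat.castHom ℝ).fieldRange :=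
  ⟨1 / 2 ^ n * |2 ^ n * q - round (2 ^ n * q)|, by
    rw [takagiTerm, show (2 : ℝ) ^ n * q = ((2 ^ n * q : ℚ) : ℝ) by push_cast; rfl,
      nearestDist_ratCast, Rat.coe_castHom]
    push_cast
    rfl⟩

lemma takagiTerm_add_period {x : ℝ} {N p : ℕ} {z : ℤ} (hx : 2 ^ (N + p) * x = 2 ^ N * x + z)
    (k : ℕ) : takagiTerm x (k + p + N) = 1 / 2 ^ p * takagiTerm x (k + N) := by
  have hshift : (2 : ℝ) ^ (k + p + N) * x = 2 ^ (k + N) * x + ((2 ^ k * z : ℤ) : ℝ) := by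
    push_cast
    linear_combination (2 : ℝ) ^ k * hx
  rw [takagiTerm, takagiTerm, hshift, nearestDist_add_intCast, add_right_comm k p N,
    pow_add _ (k + N) p]
  ring

lemma tsum_eq_sum_div_one_sub_of_add_eq_mul {K : Type*} [Field K] [TopologicalSpace K]
    [IsTopologicalRing K] [T2Space K] {g : ℕ → K} (hg : Summable g) {p : ℕ} {r : K}
    (hr : r ≠ 1) (hper : ∀ k, g (k + p) = r * g k) :
    ∑' k, g k = (∑ i ∈ range p, g i) / (1 - r) := by
  have hsplit := hg.sum_add_tsum_nat_add p
  simp only [hper, tsum_mul_left] at hsplit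
  rw [eq_div_iff (sub_ne_zero.mpr hr.symm)]
  linear_combination -hsplit

lemma Rat.exists_pow_add_mul_eq_pow_mul_add_intCast (b : ℤ) (q : ℚ) :
    ∃ N p : ℕ, 0 < p ∧ ∃ z : ℤ, (b : ℚ) ^ (N + p) * q = b ^ N * q + z := by
  have : NeZero q.den := ⟨q.den_nz⟩
  obtain ⟨m, n, hmn, hres⟩ := Set.finite_univ.exists_lt_map_eq_of_forall_mem
    (f := fun k : ℕ => ((b ^ k * q.num : ℤ) : ZMod q.den)) fun _ => Set.mem_univ _
  obtain ⟨z, hz⟩ := ((ZMod.intCast_eq_intCast_iff _ _ _).mp hres).dvd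
  obtain ⟨p, rfl⟩ := Nat.exists_eq_add_of_lt hmn
  refine ⟨m, p + 1, p.succ_pos, z, ?_⟩
  have hden : (q.den : ℚ) ≠ 0 := by exact_mod_cast q.den_nz
  have hzQ : (b : ℚ) ^ (m + p + 1) * q.num - b ^ m * q.num = q.den * z := by exact_mod_cast hz
  apply mul_right_cancel₀ hden
  rw [← add_assoc]
  linear_combination hzQ + ((b : ℚ) ^ (m + p + 1) - b ^ m) * Rat.mul_den_eq_num q

theorem takagi_rational_general (q : ℚ) :
    ∃ r : ℚ, takagi (q : ℝ) = (r : ℝ) := by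
  obtain ⟨N, p, hp, z, hz⟩ := Rat.exists_pow_add_mul_eq_pow_mul_add_intCast 2 q
  have hzR : (2 : ℝ) ^ (N + p) * q = 2 ^ N * q + z := by exact_mod_cast hz
  have hratio : (1 / 2 ^ p : ℝ) ≠ 1 := by
    rw [Ne, div_eq_one_iff_eq (by positivity)]
    exact (one_lt_pow₀ one_lt_two hp.ne').ne
  have htail := tsum_eq_sum_div_one_sub_of_add_eq_mul (g := fun k => takagiTerm q (k + N))
    ((summable_nat_add_iff N).mpr (summable_takagiTerm q)) hratio (takagiTerm_add_period hzR)
  suffices takagi q ∈ (Rat.castHom ℝ).fieldRange by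
    obtain ⟨r, hr⟩ := this
    exact ⟨r, hr.symm⟩
  have htwo : (2 : ℝ) ∈ (Rat.castHom ℝ).fieldRange := ⟨2, by simp⟩
  rw [takagi_eq_tsum_takagiTerm, ← (summable_takagiTerm q).sum_add_tsum_nat_add N, htail]
  refine add_mem (sum_mem fun i _ => takagiTerm_ratCast_mem_fieldRange q i) (div_mem
    (sum_mem fun i _ => takagiTerm_ratCast_mem_fieldRange q _)
    (sub_mem (one_mem _) (div_mem (one_mem _) (pow_mem htwo p))))

theorem takagi_rational (q : ℚ) (hq : q ∈ Set.Icc (0:ℚ) 1) :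
    ∃ r : ℚ, takagi (q : ℝ) = (r : ℝ) :=
  takagi_rational_general q
end

section
/- For any dyadic rational x₀ = k/2^n in [0,1) and any y in [0,1], τ(x₀ + y/2^n) = τ(x₀) + (1/2^n)·(τ(y) + D_n(x₀)·y), where D_n(x₀) = n − 2·(sum of the first n binary digits of x₀). -/
/-!
The defining series gives `τ x = ⟨x⟩ + τ (2x) / 2`, and `τ` has period one. For a single binary
digit `b` and `y ∈ [0, 1]` this yields `τ ((b + y) / 2) = τ (b / 2) + (τ y ± y) / 2`, because
`⟨(b + y) / 2⟩` is `y / 2` for `b = 0` and `(1 - y) / 2` for `b = 1`. The general case follows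
by induction on `n`, splitting off the last binary digit of `k`: each digit `b` contributes
`1 - 2b` to the slope.
-/

open scoped BigOperators

open Set

lemma nearestDist_add_intCast_s12 (x : ℝ) (m : ℤ) : nearestDist (x + m) = nearestDist x := by
  rw [nearestDist, nearestDist, round_add_intCast, Int.cast_add, add_sub_add_right_eq_sub]

lemma nearestDist_eq_min {x : ℝ} (hx : x ∈ Icc (0 : ℝ) 1) :
    nearestDist x = min x (1 - x) := by
  rw [nearestDist, abs_sub_round_eq_min]
  rcases hx.2.lt_or_eq with hx1 | rfl
  · rw [Int.fract_eq_self.2 ⟨hx.1, hx1⟩]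
  · simp

lemma summable_takagi_terms (x : ℝ) :
    Summable fun j : ℕ => (1 / 2 ^ j : ℝ) * nearestDist (2 ^ j * x) := by
  refine summable_geometric_two.of_nonneg_of_le
    (fun j => mul_nonneg (by positivity) (abs_nonneg _)) fun j => ?_
  calc (1 / 2 ^ j : ℝ) * nearestDist (2 ^ j * x) ≤ (1 / 2 ^ j) * 1 := by
        gcongr
        exact (abs_sub_round _).trans (by norm_num)
    _ = (1 / 2) ^ j := by rw [mul_one, one_div_pow]

lemma takagi_eq_nearestDist_add (x : ℝ) : takagi x = nearestDist x + takagi (2 * x) / 2 := by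
  rw [takagi, (summable_takagi_terms x).tsum_eq_zero_add, takagi, ← tsum_div_const]
  congr 1
  · simp
  · refine tsum_congr fun j => ?_
    rw [pow_succ, mul_assoc]
    ring

lemma takagi_zero : takagi 0 = 0 := by
  have h := takagi_eq_nearestDist_add 0
  simp only [mul_zero, nearestDist, round_zero, Int.cast_zero, sub_zero, abs_zero] at h
  linarith

lemma takagi_natCast_add (m : ℕ) (x : ℝ) : takagi (m + x) = takagi x := by
  refine tsum_congr fun j => ?_
  have h : (2 : ℝ) ^ j * (m + x) = 2 ^ j * x + ((2 ^ j * m : ℕ) : ℤ) := by push_cast; ring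
  rw [h, nearestDist_add_intCast_s12]

lemma takagi_natCast (m : ℕ) : takagi m = 0 := by
  simpa [takagi_zero] using takagi_natCast_add m 0

lemma takagi_digit_add {b : ℕ} (hb : b < 2) {y : ℝ} (hy : y ∈ Icc (0 : ℝ) 1) :
    takagi ((b + y) / 2) = takagi (b / 2) + (takagi y + (1 - 2 * b) * y) / 2 := by
  obtain ⟨hy0, hy1⟩ := hy
  rw [takagi_eq_nearestDist_add ((b + y) / 2), takagi_eq_nearestDist_add (b / 2),
    mul_div_cancel₀ _ two_ne_zero, mul_div_cancel₀ _ two_ne_zero, takagi_natCast_add,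
    takagi_natCast, zero_div, add_zero,
    nearestDist_eq_min ⟨by positivity, by interval_cases b <;> norm_num <;> linarith⟩,
    nearestDist_eq_min ⟨by positivity, by interval_cases b <;> norm_num⟩]
  interval_cases b
  · rw [min_eq_left (by norm_num; linarith), min_eq_left (by norm_num)]
    push_cast
    ring
  · rw [min_eq_right (by norm_num; linarith), min_eq_left (by norm_num)]
    push_cast
    ring

lemma digits_two_sum_eq (k : ℕ) :
    (Nat.digits 2 k).sum = k % 2 + (Nat.digits 2 (k / 2)).sum := by
  rcases eq_or_ne k 0 with rfl | hk
  · simp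
  · rw [Nat.digits_eq_cons_digits_div one_lt_two hk, List.sum_cons]

theorem takagi_dyadic_add (n : ℕ) {k : ℕ} (hk : k < 2 ^ n) {y : ℝ} (hy : y ∈ Icc (0 : ℝ) 1) :
    takagi ((k + y) / 2 ^ n)
      = takagi (k / 2 ^ n) + (takagi y + (n - 2 * (Nat.digits 2 k).sum) * y) / 2 ^ n := by
  induction n generalizing k y with
  | zero =>
    obtain rfl : k = 0 := by simpa using hk
    simp [takagi_zero]
  | succ n ih =>
    have hb : k % 2 < 2 := Nat.mod_lt k two_pos
    have hk' : k / 2 < 2 ^ n := by rw [pow_succ] at hk; omega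
    have hkR : (k : ℝ) = 2 * ↑(k / 2) + ↑(k % 2) := by exact_mod_cast (Nat.div_add_mod k 2).symm
    have hb01 : (0 : ℝ) ≤ ↑(k % 2) ∧ (↑(k % 2) : ℝ) ≤ 1 := by
      constructor
      · positivity
      · exact_mod_cast Nat.le_of_lt_succ hb
    have hshift : ∀ z : ℝ, (2 * ↑(k / 2) + z) / 2 ^ (n + 1) = (↑(k / 2) + z / 2) / 2 ^ n := by
      intro z
      rw [pow_succ]
      field_simp
    have hfull := ih hk' (y := (↑(k % 2) + y) / 2) ⟨by linarith [hy.1], by linarith [hy.2]⟩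
    have hdigit := ih hk' (y := ↑(k % 2) / 2) ⟨by linarith, by linarith⟩
    rw [← hshift, ← add_assoc, ← hkR] at hfull
    rw [← hshift, ← hkR] at hdigit
    rw [hfull, hdigit, takagi_digit_add hb hy, digits_two_sum_eq k, pow_succ]
    push_cast
    field_simp
    ring

theorem takagi_self_affine (n k : ℕ) (hk : k < 2 ^ n)
    (y : ℝ) (hy : y ∈ Set.Icc (0:ℝ) 1) :
    takagi ((k : ℝ) / 2 ^ n + y / 2 ^ n)
      = takagi ((k : ℝ) / 2 ^ n)
        + (1 / 2 ^ n) * (takagi y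
            + (((n : ℤ) - 2 * ((Nat.digits 2 k).sum : ℤ) : ℤ) : ℝ) * y) := by
  rw [← add_div, takagi_dyadic_add n hk hy]
  simp only [Int.cast_sub, Int.cast_mul, Int.cast_ofNat, Int.cast_natCast]
  ring
end

section
/- For every α with 0 < α < 1 and all x, y in [0,1], |τ(x) − τ(y)| ≤ (2^{α−1}/(1−2^{α−1}))·|x−y|^α; in particular τ belongs to the Hölder class Lip^α for every 0 < α < 1. -/
set_option maxHeartbeats 1000000


open scoped BigOperators

lemma nearestDist_nonneg (t : ℝ) : 0 ≤ nearestDist t := abs_nonneg _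

lemma nearestDist_le_half (t : ℝ) : nearestDist t ≤ 1 / 2 := abs_sub_round t

lemma nearestDist_lip (s t : ℝ) : |nearestDist s - nearestDist t| ≤ |s - t| := by
  have key : ∀ a b : ℝ, nearestDist a ≤ |a - b| + nearestDist b := by
    intro a b
    calc nearestDist a ≤ |a - (round b : ℤ)| := round_le a (round b)
      _ = |(a - b) + (b - round b)| := by ring_nf
      _ ≤ |a - b| + |b - round b| := abs_add_le _ _
      _ = |a - b| + nearestDist b := rfl
  have h1 := key s t
  have h2 := key t s
  rw [abs_sub_comm t s] at h2
  rw [abs_sub_le_iff]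
  constructor <;> linarith

lemma takagi_summable (x : ℝ) : Summable (fun n : ℕ => (1 / 2 ^ n : ℝ) * nearestDist (2 ^ n * x)) := by
  apply Summable.of_nonneg_of_le (fun n => ?_) (fun n => ?_)
    (summable_geometric_of_lt_one (by norm_num) (by norm_num : (1/2:ℝ) < 1))
  · exact mul_nonneg (by positivity) (nearestDist_nonneg _)
  · have h := nearestDist_le_half (2 ^ n * x)
    calc (1 / 2 ^ n : ℝ) * nearestDist (2 ^ n * x) ≤ (1 / 2 ^ n) * (1/2) := by
          apply mul_le_mul_of_nonneg_left h (by positivity)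
      _ ≤ (1 / 2 ^ n) * 1 := by
          apply mul_le_mul_of_nonneg_left (by norm_num) (by positivity)
      _ = (1/2)^n := by rw [one_div_pow, mul_one]

lemma min_le_rpow_mul (a b α : ℝ) (ha : 0 ≤ a) (hb : 0 ≤ b) (h0 : 0 < α) (h1 : α < 1) :
    min a b ≤ a ^ α * b ^ (1 - α) := by
  rcases eq_or_lt_of_le ha with rfl | ha'
  · simp [Real.zero_rpow h0.ne', min_le_iff.mpr (Or.inl le_rfl)]
  rcases eq_or_lt_of_le hb with rfl | hb'
  · simp [Real.zero_rpow (by linarith : (1 - α) ≠ 0), min_le_iff]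
  have hm : 0 < min a b := lt_min ha' hb'
  calc min a b = (min a b) ^ α * (min a b) ^ (1 - α) := by
        rw [← Real.rpow_add hm]; norm_num
    _ ≤ a ^ α * b ^ (1 - α) := by
        apply mul_le_mul
        · exact Real.rpow_le_rpow hm.le (min_le_left _ _) h0.le
        · exact Real.rpow_le_rpow hm.le (min_le_right _ _) (by linarith)
        · positivity
        · positivity

theorem takagi_holder (α : ℝ) (hα0 : 0 < α) (hα1 : α < 1) :
    (∀ x ∈ Set.Icc (0:ℝ) 1, ∀ y ∈ Set.Icc (0:ℝ) 1,
      |takagi x - takagi y| ≤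
        (2 : ℝ) ^ (α - 1) / (1 - (2 : ℝ) ^ (α - 1)) * |x - y| ^ α) ∧
    ∃ K : ℝ, 0 < K ∧ ∀ x ∈ Set.Icc (0:ℝ) 1, ∀ y ∈ Set.Icc (0:ℝ) 1,
      |takagi x - takagi y| ≤ K * |x - y| ^ α := by
  set r : ℝ := (2:ℝ) ^ (α - 1) with hr
  have hr0 : 0 < r := Real.rpow_pos_of_pos (by norm_num) _
  have hr1 : r < 1 := by
    have := Real.rpow_lt_one_of_one_lt_of_neg (by norm_num : (1:ℝ) < 2) (by linarith : α - 1 < 0)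
    exact this
  have main : ∀ x ∈ Set.Icc (0:ℝ) 1, ∀ y ∈ Set.Icc (0:ℝ) 1,
      |takagi x - takagi y| ≤ r / (1 - r) * |x - y| ^ α := by
    intro x hx y hy
    set h : ℝ := |x - y| with hh
    have hhn : 0 ≤ h := abs_nonneg _
    -- termwise bound
    have term_bound : ∀ n : ℕ,
        |(1 / 2 ^ n : ℝ) * nearestDist (2 ^ n * x) - (1 / 2 ^ n) * nearestDist (2 ^ n * y)|
          ≤ h ^ α * r ^ (n + 1) := by
      intro n
      have hp : (0:ℝ) < 2 ^ n := by positivity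
      have l1 : |(1 / 2 ^ n : ℝ) * nearestDist (2 ^ n * x) - (1 / 2 ^ n) * nearestDist (2 ^ n * y)|
          = (1 / 2 ^ n) * |nearestDist (2 ^ n * x) - nearestDist (2 ^ n * y)| := by
        rw [← mul_sub, abs_mul, abs_of_pos (by positivity)]
      have lip := nearestDist_lip (2 ^ n * x) (2 ^ n * y)
      have lip' : |nearestDist (2 ^ n * x) - nearestDist (2 ^ n * y)| ≤ 2 ^ n * h := by
        calc _ ≤ |2 ^ n * x - 2 ^ n * y| := lip
          _ = 2 ^ n * h := by rw [← mul_sub, abs_mul, abs_of_pos hp]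
      have bd1 : |(1 / 2 ^ n : ℝ) * nearestDist (2 ^ n * x) - (1 / 2 ^ n) * nearestDist (2 ^ n * y)| ≤ h := by
        rw [l1]
        calc (1 / 2 ^ n : ℝ) * |nearestDist (2 ^ n * x) - nearestDist (2 ^ n * y)|
            ≤ (1 / 2 ^ n) * (2 ^ n * h) := by
              apply mul_le_mul_of_nonneg_left lip' (by positivity)
          _ = h := by field_simp
      have bd2 : |(1 / 2 ^ n : ℝ) * nearestDist (2 ^ n * x) - (1 / 2 ^ n) * nearestDist (2 ^ n * y)|
          ≤ 1 / 2 ^ (n + 1) := by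
        rw [l1]
        have d1 := nearestDist_le_half (2 ^ n * x)
        have d2 := nearestDist_le_half (2 ^ n * y)
        have d3 := nearestDist_nonneg (2 ^ n * x)
        have d4 := nearestDist_nonneg (2 ^ n * y)
        have : |nearestDist (2 ^ n * x) - nearestDist (2 ^ n * y)| ≤ 1/2 := by
          rw [abs_sub_le_iff]; constructor <;> linarith
        calc (1 / 2 ^ n : ℝ) * |nearestDist (2 ^ n * x) - nearestDist (2 ^ n * y)|
            ≤ (1 / 2 ^ n) * (1/2) := mul_le_mul_of_nonneg_left this (by positivity)
          _ = 1 / 2 ^ (n + 1) := by rw [pow_succ]; ring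
      have key : (min h (1 / 2 ^ (n + 1)) : ℝ) ≤ h ^ α * r ^ (n + 1) := by
        have := min_le_rpow_mul h (1 / 2 ^ (n + 1)) α hhn (by positivity) hα0 hα1
        refine this.trans (le_of_eq ?_)
        congr 1
        rw [hr, ← Real.rpow_natCast ((2:ℝ) ^ (α - 1)) (n+1),
          ← Real.rpow_mul (by norm_num : (0:ℝ) ≤ 2)]
        rw [show ((1:ℝ) / 2 ^ (n + 1)) = (2:ℝ) ^ (-((n:ℝ)+1)) by
          rw [Real.rpow_neg (by norm_num), ← Real.rpow_natCast 2 (n+1)]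
          push_cast; rw [one_div]]
        rw [← Real.rpow_mul (by norm_num : (0:ℝ) ≤ 2)]
        push_cast
        ring_nf
      exact (le_min bd1 bd2).trans key
    -- summability facts
    have sx := takagi_summable x
    have sy := takagi_summable y
    have sdiff : Summable (fun n : ℕ =>
        (1 / 2 ^ n : ℝ) * nearestDist (2 ^ n * x) - (1 / 2 ^ n) * nearestDist (2 ^ n * y)) :=
      sx.sub sy
    have sgeo : Summable (fun n : ℕ => h ^ α * r ^ (n + 1)) := by
      apply Summable.mul_left
      exact (summable_geometric_of_lt_one hr0.le hr1).comp_injective (add_left_injective 1)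
    have sabs : Summable (fun n : ℕ =>
        |(1 / 2 ^ n : ℝ) * nearestDist (2 ^ n * x) - (1 / 2 ^ n) * nearestDist (2 ^ n * y)|) := by
      apply Summable.of_nonneg_of_le (fun n => abs_nonneg _) term_bound sgeo
    have e1 : takagi x - takagi y = ∑' n : ℕ,
        ((1 / 2 ^ n : ℝ) * nearestDist (2 ^ n * x) - (1 / 2 ^ n) * nearestDist (2 ^ n * y)) := by
      rw [takagi, takagi, ← Summable.tsum_sub sx sy]
    have step1 : |∑' n : ℕ, ((1 / 2 ^ n : ℝ) * nearestDist (2 ^ n * x) - (1 / 2 ^ n) * nearestDist (2 ^ n * y))|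
        ≤ ∑' n : ℕ, |(1 / 2 ^ n : ℝ) * nearestDist (2 ^ n * x) - (1 / 2 ^ n) * nearestDist (2 ^ n * y)| := by
      have := norm_tsum_le_tsum_norm (f := fun n : ℕ =>
        ((1 / 2 ^ n : ℝ) * nearestDist (2 ^ n * x) - (1 / 2 ^ n) * nearestDist (2 ^ n * y)))
        (by simpa [Real.norm_eq_abs] using sabs)
      simpa [Real.norm_eq_abs] using this
    rw [e1]
    calc |∑' n : ℕ, ((1 / 2 ^ n : ℝ) * nearestDist (2 ^ n * x) - (1 / 2 ^ n) * nearestDist (2 ^ n * y))|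
        ≤ ∑' n : ℕ, |(1 / 2 ^ n : ℝ) * nearestDist (2 ^ n * x) - (1 / 2 ^ n) * nearestDist (2 ^ n * y)| := step1
      _ ≤ ∑' n : ℕ, h ^ α * r ^ (n + 1) := Summable.tsum_le_tsum term_bound sabs sgeo
      _ = r / (1 - r) * h ^ α := by
          have : ∀ n : ℕ, h ^ α * r ^ (n + 1) = (h ^ α * r) * r ^ n := by
            intro n; rw [pow_succ]; ring
          simp_rw [this]
          rw [tsum_mul_left, tsum_geometric_of_lt_one hr0.le hr1]
          field_simp
  exact ⟨main, r / (1 - r), div_pos hr0 (by linarith), main⟩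
end
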